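/- arXiv:1406.1151 — 2 statements merged into one kernel-verified Lean document; each statement's English description precedes it below -/
import Mathlib

section
/- With the cascade sets $\Gamma_0, \Gamma_1, \dots$ defined as in the physical spike cascade, and $\Gamma = \bigcup_{k=0}^{N-1} \Gamma_k$, one has: (a) for every $i \notin \Gamma$, $x_i + \alpha|\Gamma|/N < 1$; (b) $|\Gamma| = \inf\{k \in \{0,\dots,N\} : \#\{i : x_i \geq 1 - \alpha k / N\} \leq k\}$. -/
/-- Properties of the terminal cascade set `Γtot = Γ 0 ∪ ⋯ ∪ Γ (N-1)`:
(a) every particle not in `Γtot` stays strictly below the threshold after receiving the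
total kick `α |Γtot| / N`;
(b) `|Γtot| = inf {k ∈ {0,…,N} : #{i : x i ≥ 1 - α k / N} ≤ k}`. -/
theorem cascade_card_eq_inf
    (N : ℕ) (hN : 1 ≤ N) (x : Fin N → ℝ) (hx : ∀ i, x i ≤ 1)
    (α : ℝ) (hα : α ∈ Set.Ioo (0:ℝ) 1)
    (Γ : ℕ → Finset (Fin N))
    (hΓ0 : Γ 0 = Finset.univ.filter fun i => 1 ≤ x i)
    (hΓsucc : ∀ k : ℕ, Γ (k+1) =
      Finset.univ.filter fun i =>
        i ∉ (Finset.range (k+1)).biUnion Γ ∧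
        1 ≤ x i + α * ((Finset.range (k+1)).biUnion Γ).card / N)
    (Γtot : Finset (Fin N)) (hΓtot : Γtot = (Finset.range N).biUnion Γ) :
    (∀ i ∉ Γtot, x i + α * Γtot.card / N < 1) ∧
    Γtot.card = sInf {k : ℕ | k ≤ N ∧
      (Finset.univ.filter fun i => 1 - α * k / N ≤ x i).card ≤ k} := by
  obtain ⟨hα0, hα1⟩ := hα
  have hNpos : (0:ℝ) < N := by exact_mod_cast hN
  have hBsucc : ∀ m : ℕ, (Finset.range (m+1)).biUnion Γ =
      (Finset.range m).biUnion Γ ∪ Γ m := by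
    intro m
    rw [Finset.range_add_one, Finset.biUnion_insert, Finset.union_comm]
  have hBmono : ∀ m n : ℕ, m ≤ n →
      (Finset.range m).biUnion Γ ⊆ (Finset.range n).biUnion Γ := by
    intro m n hmn
    exact Finset.biUnion_subset_biUnion_of_subset_left _ (Finset.range_subset_range.mpr hmn)
  have hcmono : ∀ m n : ℕ, m ≤ n →
      (((Finset.range m).biUnion Γ).card : ℝ) ≤ ((Finset.range n).biUnion Γ).card := by
    intro m n hmn
    exact_mod_cast Finset.card_le_card (hBmono m n hmn)
  -- lower bound on x i for members of partial unions
  have hL : ∀ m : ℕ, ∀ i ∈ (Finset.range (m+1)).biUnion Γ,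
      1 - α * ((Finset.range m).biUnion Γ).card / N ≤ x i := by
    intro m
    induction m with
    | zero =>
      intro i hi
      rw [hBsucc] at hi
      simp only [Finset.range_zero, Finset.biUnion_empty, Finset.empty_union] at hi ⊢
      rw [hΓ0] at hi
      have h2 := (Finset.mem_filter.mp hi).2
      simp only [Finset.card_empty, Nat.cast_zero, mul_zero, zero_div, sub_zero]
      linarith
    | succ m ih =>
      intro i hi
      rw [hBsucc] at hi
      rcases Finset.mem_union.mp hi with h | h
      · have h1 := ih i h
        have h2 : α * ((Finset.range m).biUnion Γ).card / N ≤
            α * ((Finset.range (m+1)).biUnion Γ).card / N := by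
          have hc := hcmono m (m+1) (Nat.le_succ m)
          gcongr
        linarith
      · rw [hΓsucc m] at h
        have h2 := (Finset.mem_filter.mp h).2.2
        linarith
  -- emptiness propagation
  have hprop : ∀ m : ℕ, Γ m = ∅ → Γ (m+1) = ∅ := by
    intro m hm
    rcases m with _ | m
    · rw [hΓsucc 0]
      have hB1 : (Finset.range 1).biUnion Γ = ∅ := by
        rw [hBsucc 0, hm]; simp
      ext i
      simp only [Finset.mem_filter, Finset.mem_univ, true_and, Finset.notMem_empty,
        iff_false, not_and]
      intro _ h2
      rw [hB1] at h2
      simp only [Finset.card_empty, Nat.cast_zero, mul_zero, zero_div, add_zero] at h2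
      have : i ∈ Γ 0 := by rw [hΓ0]; exact Finset.mem_filter.mpr ⟨Finset.mem_univ i, h2⟩
      rw [hm] at this
      exact absurd this (Finset.notMem_empty i)
    · have hBeq : (Finset.range (m+1+1)).biUnion Γ = (Finset.range (m+1)).biUnion Γ := by
        rw [hBsucc (m+1), hm, Finset.union_empty]
      rw [hΓsucc (m+1), hBeq, ← hΓsucc m, hm]
  have hprop' : ∀ m n : ℕ, m ≤ n → Γ m = ∅ → Γ n = ∅ := by
    intro m n hmn hm
    induction n, hmn using Nat.le_induction with
    | base => exact hm
    | succ n hn ih => exact hprop n ih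
  -- the cascade has stopped by step N
  have hΓN : Γ N = ∅ := by
    by_cases hall : ∀ j < N, Γ j ≠ ∅
    · have key : ∀ j k : ℕ, j < k → Disjoint (Γ j) (Γ k) := by
        intro j k hjk
        rcases k with _ | k
        · omega
        rw [Finset.disjoint_right]
        intro i hik hij
        rw [hΓsucc k] at hik
        have h1 := (Finset.mem_filter.mp hik).2.1
        exact h1 (Finset.mem_biUnion.mpr ⟨j, Finset.mem_range.mpr (by omega), hij⟩)
      have hdisj : ∀ j ∈ Finset.range N, ∀ k ∈ Finset.range N, j ≠ k →
          Disjoint (Γ j) (Γ k) := by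
        intro j _ k _ hjk
        rcases lt_or_gt_of_ne hjk with h | h
        · exact key j k h
        · exact (key k j h).symm
      have hcard : ((Finset.range N).biUnion Γ).card = ∑ j ∈ Finset.range N, (Γ j).card :=
        Finset.card_biUnion hdisj
      have hge : N ≤ ((Finset.range N).biUnion Γ).card := by
        rw [hcard]
        calc N = ∑ _j ∈ Finset.range N, 1 := by simp
        _ ≤ ∑ j ∈ Finset.range N, (Γ j).card := by
          apply Finset.sum_le_sum
          intro j hj
          exact Nat.one_le_iff_ne_zero.mpr
            (fun h0 => hall j (Finset.mem_range.mp hj) (Finset.card_eq_zero.mp h0))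
      have hle : ((Finset.range N).biUnion Γ).card ≤ N := by
        simpa using Finset.card_le_univ ((Finset.range N).biUnion Γ)
      have huniv : (Finset.range N).biUnion Γ = Finset.univ := by
        apply Finset.eq_univ_of_card
        simp only [Fintype.card_fin]
        omega
      obtain ⟨M, hM⟩ : ∃ M, N = M + 1 := ⟨N - 1, by omega⟩
      have hd := hΓsucc M
      rw [← hM, huniv] at hd
      rw [hd]
      ext i
      simp
    · push_neg at hall
      obtain ⟨j, hjN, hj⟩ := hall
      exact hprop' j N (le_of_lt hjN) (by simpa using hj)
  -- part (a)
  have parta : ∀ i ∉ Γtot, x i + α * Γtot.card / N < 1 := by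
    intro i hi
    by_contra hcon
    push_neg at hcon
    obtain ⟨M, hM⟩ : ∃ M, N = M + 1 := ⟨N - 1, by omega⟩
    have hd := hΓsucc M
    rw [← hM, ← hΓtot, hΓN] at hd
    have : i ∈ (∅ : Finset (Fin N)) := by
      rw [hd, Finset.mem_filter]
      exact ⟨Finset.mem_univ i, hi, hcon⟩
    exact absurd this (Finset.notMem_empty i)
  refine ⟨parta, ?_⟩
  have hmem : Γtot.card ∈ {k : ℕ | k ≤ N ∧
      (Finset.univ.filter fun i => 1 - α * k / N ≤ x i).card ≤ k} := by
    simp only [Set.mem_setOf_eq]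
    constructor
    · simpa using Finset.card_le_univ Γtot
    · apply Finset.card_le_card
      intro i hi
      rw [Finset.mem_filter] at hi
      by_contra hnot
      have h1 := parta i hnot
      linarith [hi.2]
  have hlow : ∀ k ∈ {k : ℕ | k ≤ N ∧
      (Finset.univ.filter fun i => 1 - α * k / N ≤ x i).card ≤ k}, Γtot.card ≤ k := by
    intro k hk
    obtain ⟨hkN, hfk⟩ := hk
    have hall : ∀ n : ℕ, ((Finset.range n).biUnion Γ).card ≤ k := by
      intro n
      induction n with
      | zero => simp
      | succ n ih =>
        have hsub : (Finset.range (n+1)).biUnion Γ ⊆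
            Finset.univ.filter fun i => 1 - α * k / N ≤ x i := by
          intro i hi
          rw [Finset.mem_filter]
          refine ⟨Finset.mem_univ i, ?_⟩
          have h1 := hL n i hi
          have h2 : α * ((Finset.range n).biUnion Γ).card / N ≤ α * k / N := by
            have hc : (((Finset.range n).biUnion Γ).card : ℝ) ≤ k := by exact_mod_cast ih
            gcongr
          linarith
        exact le_trans (Finset.card_le_card hsub) hfk
    rw [hΓtot]
    exact hall N
  exact le_antisymm (le_csInf ⟨_, hmem⟩ hlow) (Nat.sInf_le hmem)
end

section
/- Let $f, g \in \hat{\mathcal{D}}([0,T],\mathbb{R})$ be càdlàg functions with $f$ monotone (nondecreasing or nonincreasing). Then for all $t \in [0,T]$ and $\delta > 0$, the M1 oscillation function satisfies $w_T(f + g, t, \delta) \leq v_T(g, t, \delta)$, where $w_T(h,t,\delta) = \sup_{0\vee(t-\delta) \leq t_1 < t_2 < t_3 \leq T\wedge(t+\delta)} \mathrm{dist}(h(t_2), [h(t_1), h(t_3)])$ and $v_T(g,t,\delta) = \sup_{0\vee(t-\delta) \leq t_1 \leq t_2 \leq T\wedge(t+\delta)} |g(t_1) - g(t_2)|$. -/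
open Set Filter

/-- A càdlàg function on `[0,T]`. -/
def CadlagOn (f : ℝ → ℝ) (T : ℝ) : Prop :=
  (∀ t ∈ Set.Ico (0:ℝ) T, ContinuousWithinAt f (Set.Ici t) t) ∧
  (∀ t ∈ Set.Ioc (0:ℝ) T, ∃ l : ℝ, Filter.Tendsto f (nhdsWithin t (Set.Iio t)) (nhds l))

/-- Distance from `x` to the (non-ordered) segment between `a` and `b`. -/
noncomputable def segDist (x a b : ℝ) : ℝ :=
  sInf {d : ℝ | ∃ θ ∈ Set.Icc (0:ℝ) 1, d = |θ * a + (1 - θ) * b - x|}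

/-- The M1 oscillation function `w_T`. -/
noncomputable def wT (T : ℝ) (h : ℝ → ℝ) (t δ : ℝ) : ℝ :=
  sSup {d : ℝ | ∃ t1 t2 t3 : ℝ, max 0 (t - δ) ≤ t1 ∧ t1 < t2 ∧ t2 < t3 ∧
    t3 ≤ min T (t + δ) ∧ d = segDist (h t2) (h t1) (h t3)}

/-- The ordinary oscillation function `v_T`. -/
noncomputable def vT (T : ℝ) (g : ℝ → ℝ) (t δ : ℝ) : ℝ :=
  sSup {d : ℝ | ∃ t1 t2 : ℝ, max 0 (t - δ) ≤ t1 ∧ t1 ≤ t2 ∧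
    t2 ≤ min T (t + δ) ∧ d = |g t1 - g t2|}

/-! Since `f` is monotone, `f t₂` is a convex combination `θ f t₁ + (1 - θ) f t₃`; the same
weights applied to `f + g` give a point of the segment within
`θ |g t₁ - g t₂| + (1 - θ) |g t₃ - g t₂|` of `(f + g) t₂`. A càdlàg function is bounded on the
compact interval `[0, T]`, so the supremum defining `v_T` is a real bound rather than the junk
value `sSup` takes on unbounded sets. -/

open Bornology Metric Topology

lemma segDist_le_of_mem_segment {x a b z : ℝ} (hz : z ∈ segment ℝ a b) :
    segDist x a b ≤ |z - x| := by
  obtain ⟨θ, μ, hθ, hμ, hsum, rfl⟩ := hz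
  refine csInf_le ⟨0, fun d ⟨_, _, hd⟩ ↦ hd ▸ abs_nonneg _⟩ ⟨θ, ⟨hθ, by linarith⟩, ?_⟩
  rw [← hsum, add_sub_cancel_left, smul_eq_mul, smul_eq_mul]

lemma segDist_add_le_max {x a b y u v : ℝ} (hx : x ∈ uIcc a b) :
    segDist (x + y) (a + u) (b + v) ≤ max |u - y| |y - v| := by
  rw [← segment_eq_uIcc] at hx
  obtain ⟨θ, μ, hθ, hμ, hsum, rfl⟩ := hx
  have hmem : θ • (a + u) + μ • (b + v) - (θ • a + μ • b + y) ∈ segment ℝ (u - y) (v - y) :=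
    ⟨θ, μ, hθ, hμ, hsum, by simp only [smul_eq_mul]; linear_combination -y * hsum⟩
  calc segDist (θ • a + μ • b + y) (a + u) (b + v)
      ≤ |θ • (a + u) + μ • (b + v) - (θ • a + μ • b + y)| :=
        segDist_le_of_mem_segment ⟨θ, μ, hθ, hμ, hsum, rfl⟩
    _ ≤ max |u - y| |v - y| :=
        convexOn_univ_norm.le_max_of_mem_segment (mem_univ _) (mem_univ _) hmem
    _ = max |u - y| |y - v| := by rw [abs_sub_comm v]

lemma mem_uIcc_of_monotoneOn_or_antitoneOn {α β : Type*} [LinearOrder α] [Lattice β]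
    {f : α → β} {s : Set α} (hf : MonotoneOn f s ∨ AntitoneOn f s) {a b c : α}
    (hs : uIcc a c ⊆ s) (hb : b ∈ uIcc a c) : f b ∈ uIcc (f a) (f c) :=
  hf.elim (fun h ↦ (h.mono hs).mapsTo_uIcc hb) (fun h ↦ (h.mono hs).mapsTo_uIcc hb)

theorem IsCompact.isBounded_image_of_forall_tendsto {α β : Type*} [TopologicalSpace α]
    [LinearOrder α] [OrderTopology α] [PseudoMetricSpace β] {K : Set α} {g : α → β}
    (hK : IsCompact K) (hleft : ∀ x ∈ K, ∃ l, Tendsto g (𝓝[K ∩ Iio x] x) (𝓝 l))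
    (hright : ∀ x ∈ K, ∃ l, Tendsto g (𝓝[K ∩ Ici x] x) (𝓝 l)) : IsBounded (g '' K) := by
  refine hK.induction_on (p := fun s ↦ IsBounded (g '' s)) (by simp)
    (fun s t hst ht ↦ ht.subset (image_mono hst))
    (fun s t hs ht ↦ by simpa only [image_union] using hs.union ht) fun x hx ↦ ?_
  obtain ⟨l, hl⟩ := hleft x hx
  obtain ⟨r, hr⟩ := hright x hx
  obtain ⟨sl, hsl, hsl_bdd⟩ := exists_isBounded_image_of_tendsto hl
  obtain ⟨sr, hsr, hsr_bdd⟩ := exists_isBounded_image_of_tendsto hr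
  have hsplit : K = K ∩ Iio x ∪ K ∩ Ici x := by
    rw [← inter_union_distrib_left, Iio_union_Ici, inter_univ]
  refine ⟨sl ∪ sr, ?_, by simpa only [image_union] using hsl_bdd.union hsr_bdd⟩
  rw [hsplit, nhdsWithin_union]
  exact union_mem_sup hsl hsr

lemma CadlagOn.isBounded_image {g : ℝ → ℝ} {T : ℝ} (hg : CadlagOn g T) :
    IsBounded (g '' Icc 0 T) := by
  refine isCompact_Icc.isBounded_image_of_forall_tendsto (fun x hx ↦ ?_) (fun x hx ↦ ?_)
  · rcases hx.1.eq_or_lt with rfl | hx0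
    · have hempty : Icc 0 T ∩ Iio 0 = ∅ :=
        eq_empty_of_forall_notMem fun y hy ↦ hy.2.not_ge hy.1.1
      exact ⟨0, by simp only [hempty, nhdsWithin_empty, tendsto_bot]⟩
    · obtain ⟨l, hl⟩ := hg.2 x ⟨hx0, hx.2⟩
      exact ⟨l, hl.mono_left (nhdsWithin_mono _ inter_subset_right)⟩
  · rcases hx.2.lt_or_eq with hxT | rfl
    · exact ⟨g x, (hg.1 x ⟨hx.1, hxT⟩).tendsto.mono_left (nhdsWithin_mono _ inter_subset_right)⟩
    · have hsingle : Icc 0 x ∩ Ici x = {x} :=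
        eq_singleton_iff_unique_mem.mpr ⟨⟨hx, self_mem_Ici⟩, fun y hy ↦ le_antisymm hy.1.2 hy.2⟩
      exact ⟨g x, by simpa only [hsingle, nhdsWithin_singleton] using tendsto_pure_nhds g x⟩

lemma vT_nonneg (T : ℝ) (g : ℝ → ℝ) (t δ : ℝ) : 0 ≤ vT T g t δ :=
  Real.sSup_nonneg fun _ ⟨_, _, _, _, _, hd⟩ ↦ hd ▸ abs_nonneg _

lemma abs_sub_le_vT {T : ℝ} {g : ℝ → ℝ} {t δ t₁ t₂ : ℝ} (hg : IsBounded (g '' Icc 0 T))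
    (h₁ : max 0 (t - δ) ≤ t₁) (h₁₂ : t₁ ≤ t₂) (h₂ : t₂ ≤ min T (t + δ)) :
    |g t₁ - g t₂| ≤ vT T g t δ := by
  obtain ⟨C, hC⟩ := isBounded_iff.mp hg
  have hmem {s : ℝ} (h0 : 0 ≤ s) (hT : s ≤ T) : g s ∈ g '' Icc 0 T := mem_image_of_mem g ⟨h0, hT⟩
  refine le_csSup ⟨C, ?_⟩ ⟨t₁, t₂, h₁, h₁₂, h₂, rfl⟩
  rintro _ ⟨s₁, s₂, hs₁, hs₁₂, hs₂, rfl⟩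
  have h0 : 0 ≤ s₁ := (le_max_left _ _).trans hs₁
  have hT : s₂ ≤ T := hs₂.trans (min_le_left _ _)
  exact hC (hmem h0 (hs₁₂.trans hT)) (hmem (h0.trans hs₁₂) hT)

theorem wT_add_monotone_le_vT_general
    (T : ℝ) (f g : ℝ → ℝ)
    (hg : CadlagOn g T)
    (hfmono : MonotoneOn f (Set.Icc 0 T) ∨ AntitoneOn f (Set.Icc 0 T)) :
    ∀ t ∈ Set.Icc (0:ℝ) T, ∀ δ > 0, wT T (f + g) t δ ≤ vT T g t δ := by
  intro t _ δ _
  have hgb := hg.isBounded_image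
  refine Real.sSup_le ?_ (vT_nonneg T g t δ)
  rintro _ ⟨t₁, t₂, t₃, h₁, h₁₂, h₂₃, h₃, rfl⟩
  have hsub : uIcc t₁ t₃ ⊆ Icc 0 T := by
    rw [uIcc_of_le (h₁₂.trans h₂₃).le]
    exact Icc_subset_Icc ((le_max_left _ _).trans h₁) (h₃.trans (min_le_left _ _))
  have hf₂ : f t₂ ∈ uIcc (f t₁) (f t₃) :=
    mem_uIcc_of_monotoneOn_or_antitoneOn hfmono hsub (Icc_subset_uIcc ⟨h₁₂.le, h₂₃.le⟩)
  calc segDist (f t₂ + g t₂) (f t₁ + g t₁) (f t₃ + g t₃)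
      ≤ max |g t₁ - g t₂| |g t₂ - g t₃| := segDist_add_le_max hf₂
    _ ≤ vT T g t δ := max_le (abs_sub_le_vT hgb h₁ h₁₂.le (h₂₃.le.trans h₃))
        (abs_sub_le_vT hgb (h₁.trans h₁₂.le) h₂₃.le h₃)

/-- If `f` is monotone and càdlàg and `g` is càdlàg on `[0,T]`, then
`w_T(f+g, t, δ) ≤ v_T(g, t, δ)` for every `t ∈ [0,T]` and `δ > 0`. -/
theorem wT_add_monotone_le_vT
    (T : ℝ) (hT : 0 < T) (f g : ℝ → ℝ)
    (hf : CadlagOn f T) (hg : CadlagOn g T)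
    (hfmono : MonotoneOn f (Set.Icc 0 T) ∨ AntitoneOn f (Set.Icc 0 T)) :
    ∀ t ∈ Set.Icc (0:ℝ) T, ∀ δ > 0, wT T (f + g) t δ ≤ vT T g t δ :=
  wT_add_monotone_le_vT_general T f g hg hfmono
end
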